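/- Let u be a divergence-free vector field on Ω = ℝ² × [-L, L], smooth and vanishing on ∂Ω together with decay at horizontal infinity. Then the nonlinear term satisfies the identity -∫_Ω ((u·∇)u)·Δ_h u dx = ∫_Ω Σ_{l=1}^{2} Σ_{j,k=1}^{3} (∂u_k/∂x_j)(∂u_j/∂x_l)(∂u_k/∂x_l) dx, where Δ_h = ∂²/∂x₁² + ∂²/∂x₂². -/

import Mathlib

open MeasureTheory

noncomputable section

/-- The infinite channel `Ω = ℝ² × [-L, L]`, as a subset of `ℝ × ℝ × ℝ`. -/
def chan (L : ℝ) : Set (ℝ × ℝ × ℝ) := {p | p.2.2 ∈ Set.Icc (-L) L}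

/-- Coordinate directions in `ℝ³ = ℝ × ℝ × ℝ`. -/
def e3 : Fin 3 → ℝ × ℝ × ℝ
  | 0 => (1, 0, 0)
  | 1 => (0, 1, 0)
  | 2 => (0, 0, 1)

/-- Partial derivative `∂f/∂xᵢ` in `ℝ³`. -/
def pd (i : Fin 3) (f : ℝ × ℝ × ℝ → ℝ) (p : ℝ × ℝ × ℝ) : ℝ := fderiv ℝ f p (e3 i)


example : e3 0 = (1,0,0) := rfl
example : e3 2 = (0,0,1) := rfl

lemma pd_contDiff {f : ℝ × ℝ × ℝ → ℝ} (hf : ContDiff ℝ (⊤ : ℕ∞) f) (i : Fin 3) :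
    ContDiff ℝ (⊤ : ℕ∞) (pd i f) := by
  have h1 : ContDiff ℝ (⊤ : ℕ∞) (fderiv ℝ f) := hf.fderiv_right (by simp)
  exact (ContinuousLinearMap.apply ℝ ℝ (e3 i)).contDiff.comp h1

lemma pd_hcs {f : ℝ × ℝ × ℝ → ℝ} (hc : HasCompactSupport f) (i : Fin 3) :
    HasCompactSupport (pd i f) := hc.fderiv_apply ℝ (e3 i)

lemma pd_mul {f g : ℝ × ℝ × ℝ → ℝ} (hf : ContDiff ℝ (⊤ : ℕ∞) f) (hg : ContDiff ℝ (⊤ : ℕ∞) g)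
    (i : Fin 3) (p : ℝ × ℝ × ℝ) :
    pd i (fun q => f q * g q) p = pd i f p * g p + f p * pd i g p := by
  unfold pd
  rw [fderiv_fun_mul (hf.differentiable (by simp)).differentiableAt
    (hg.differentiable (by simp)).differentiableAt]
  simp only [ContinuousLinearMap.add_apply, ContinuousLinearMap.smul_apply, smul_eq_mul]; ring

lemma pd_pd {f : ℝ × ℝ × ℝ → ℝ} (hf : ContDiff ℝ (⊤ : ℕ∞) f) (i j : Fin 3) (p : ℝ × ℝ × ℝ) :
    pd i (pd j f) p = fderiv ℝ (fderiv ℝ f) p (e3 i) (e3 j) := by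
  have h1 : ContDiff ℝ (⊤ : ℕ∞) (fderiv ℝ f) := hf.fderiv_right (by simp)
  have h2 : HasFDerivAt (fun q => fderiv ℝ f q (e3 j))
      ((ContinuousLinearMap.apply ℝ ℝ (e3 j)).comp (fderiv ℝ (fderiv ℝ f) p)) p :=
    (ContinuousLinearMap.apply ℝ ℝ (e3 j)).hasFDerivAt.comp p
      (h1.differentiable (by simp)).differentiableAt.hasFDerivAt
  unfold pd
  rw [h2.fderiv]
  rfl

lemma pd_comm {f : ℝ × ℝ × ℝ → ℝ} (hf : ContDiff ℝ (⊤ : ℕ∞) f) (i j : Fin 3) (p : ℝ × ℝ × ℝ) :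
    pd i (pd j f) p = pd j (pd i f) p := by
  rw [pd_pd hf, pd_pd hf]
  exact hf.contDiffAt.isSymmSndFDerivAt (by rw [minSmoothness_of_isRCLikeNormedField]; exact WithTop.coe_le_coe.mpr (le_top : (2 : ℕ∞) ≤ ⊤)) (e3 i) (e3 j)

lemma iso_x (y z : ℝ) : Isometry (fun x : ℝ => ((x, y, z) : ℝ × ℝ × ℝ)) := by
  intro a b
  simp [Prod.edist_eq, edist_self]

lemma iso_y (x z : ℝ) : Isometry (fun y : ℝ => ((x, y, z) : ℝ × ℝ × ℝ)) := by
  intro a b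
  simp [Prod.edist_eq, edist_self]

/-- Integral over ℝ of the derivative of a compactly supported C¹ function is zero. -/
lemma integral_deriv_zero {g g' : ℝ → ℝ} (hd : ∀ x, HasDerivAt g (g' x) x)
    (hc : Continuous g') (hs : HasCompactSupport g) (hs' : HasCompactSupport g') :
    ∫ x, g' x = 0 := by
  obtain ⟨r, hr⟩ := ((hs.union hs').isBounded).subset_closedBall 0
  set R := max r 0 + 1 with hR
  have hRpos : 0 < R := by positivity
  have houts : ∀ x : ℝ, x ∉ Set.Ioc (-R) R → g' x = 0 := by
    intro x hx
    by_contra h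
    have : x ∈ tsupport g' := subset_tsupport g' (by simpa using h)
    have := hr (Set.mem_union_right _ this)
    rw [Real.closedBall_eq_Icc] at this
    simp only [Set.mem_Icc, zero_sub, zero_add] at this
    apply hx
    constructor
    · nlinarith [le_max_left r 0, this.1]
    · nlinarith [le_max_left r 0, this.2]
  have hgz : ∀ x : ℝ, |x| > max r 0 → g x = 0 := by
    intro x hx
    by_contra h
    have : x ∈ tsupport g := subset_tsupport g (by simpa using h)
    have := hr (Set.mem_union_left _ this)
    rw [Real.closedBall_eq_Icc] at this
    simp only [Set.mem_Icc, zero_sub, zero_add] at this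
    rcases abs_cases x with ⟨h1, _⟩ | ⟨h1, _⟩
    · nlinarith [le_max_left r 0, this.2]
    · nlinarith [le_max_left r 0, this.1]
  calc ∫ x, g' x = ∫ x in Set.Ioc (-R) R, g' x :=
        (setIntegral_eq_integral_of_forall_compl_eq_zero (fun x hx => houts x hx)).symm
    _ = ∫ x in (-R)..R, g' x := by
        rw [intervalIntegral.integral_of_le (by linarith : -R ≤ R)]
    _ = g R - g (-R) := intervalIntegral.integral_eq_sub_of_hasDerivAt
        (fun x _ => hd x) (hc.intervalIntegrable _ _)
    _ = 0 := by
        rw [hgz R (by rw [abs_of_pos hRpos]; simp [hR]), hgz (-R) (by rw [abs_neg, abs_of_pos hRpos]; simp [hR])]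
        ring

lemma chan_eq (L : ℝ) :
    chan L = (Set.univ : Set ℝ) ×ˢ ((Set.univ : Set ℝ) ×ˢ Set.Icc (-L) L) := by
  ext p; simp [chan, Set.mem_prod]

lemma meas_chan (L : ℝ) :
    (volume : Measure (ℝ × ℝ × ℝ)).restrict (chan L) =
      Measure.prod volume (Measure.prod volume (volume.restrict (Set.Icc (-L) L))) := by
  rw [chan_eq, Measure.volume_eq_prod, ← Measure.prod_restrict, Measure.restrict_univ]
  congr 1
  rw [Measure.volume_eq_prod, ← Measure.prod_restrict, Measure.restrict_univ]

lemma meas2 (L : ℝ) :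
    Measure.prod (volume : Measure ℝ) ((volume : Measure ℝ).restrict (Set.Icc (-L) L)) =
      (volume : Measure (ℝ × ℝ)).restrict (Set.univ ×ˢ Set.Icc (-L) L) := by
  rw [Measure.volume_eq_prod, ← Measure.prod_restrict, Measure.restrict_univ]

lemma hasDerivAt_sec0 {h : ℝ × ℝ × ℝ → ℝ} (hs : ContDiff ℝ (⊤ : ℕ∞) h) (x y z : ℝ) :
    HasDerivAt (fun t => h (t, y, z)) (pd 0 h (x, y, z)) x := by
  have h1 : HasDerivAt (fun t : ℝ => ((t, y, z) : ℝ × ℝ × ℝ)) ((1 : ℝ), (0 : ℝ), (0 : ℝ)) x :=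
    (hasDerivAt_id x).prodMk ((hasDerivAt_const x y).prodMk (hasDerivAt_const x z))
  have h2 := ((hs.differentiable (by simp)) (x, y, z)).hasFDerivAt.comp_hasDerivAt x h1
  exact h2

lemma hasDerivAt_sec1 {h : ℝ × ℝ × ℝ → ℝ} (hs : ContDiff ℝ (⊤ : ℕ∞) h) (x y z : ℝ) :
    HasDerivAt (fun t => h (x, t, z)) (pd 1 h (x, y, z)) y := by
  have h1 : HasDerivAt (fun t : ℝ => ((x, t, z) : ℝ × ℝ × ℝ)) ((0 : ℝ), (1 : ℝ), (0 : ℝ)) y :=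
    (hasDerivAt_const y x).prodMk ((hasDerivAt_id y).prodMk (hasDerivAt_const y z))
  have h2 := ((hs.differentiable (by simp)) (x, y, z)).hasFDerivAt.comp_hasDerivAt y h1
  exact h2

lemma hasDerivAt_sec2 {h : ℝ × ℝ × ℝ → ℝ} (hs : ContDiff ℝ (⊤ : ℕ∞) h) (x y z : ℝ) :
    HasDerivAt (fun t => h (x, y, t)) (pd 2 h (x, y, z)) z := by
  have h1 : HasDerivAt (fun t : ℝ => ((x, y, t) : ℝ × ℝ × ℝ)) ((0 : ℝ), (0 : ℝ), (1 : ℝ)) z :=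
    (hasDerivAt_const z x).prodMk ((hasDerivAt_const z y).prodMk (hasDerivAt_id z))
  have h2 := ((hs.differentiable (by simp)) (x, y, z)).hasFDerivAt.comp_hasDerivAt z h1
  exact h2


lemma int_pd0_eq_zero (L : ℝ) {h : ℝ × ℝ × ℝ → ℝ}
    (hs : ContDiff ℝ (⊤ : ℕ∞) h) (hc : HasCompactSupport h) :
    ∫ p in chan L, pd 0 h p = 0 := by
  have hFc : Continuous (pd 0 h) := (pd_contDiff hs 0).continuous
  have hFs : HasCompactSupport (pd 0 h) := pd_hcs hc 0
  have hInt : Integrable (pd 0 h) volume := hFc.integrable_of_hasCompactSupport hFs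
  have hIntP : Integrable (pd 0 h)
      (Measure.prod volume (Measure.prod volume (volume.restrict (Set.Icc (-L) L)))) := by
    rw [← meas_chan L]; exact hInt.restrict
  rw [show (∫ p in chan L, pd 0 h p)
      = ∫ p, pd 0 h p ∂(Measure.prod volume (Measure.prod volume
          (volume.restrict (Set.Icc (-L) L)))) from by rw [← meas_chan L]]
  rw [MeasureTheory.integral_prod_symm _ hIntP]
  have key : ∀ q : ℝ × ℝ, ∫ x : ℝ, pd 0 h (x, q) = 0 := by
    intro q
    exact integral_deriv_zero (fun x => hasDerivAt_sec0 hs x q.1 q.2)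
      (hFc.comp ((continuous_id.prodMk continuous_const)))
      (hc.comp_isClosedEmbedding (iso_x q.1 q.2).isClosedEmbedding)
      (hFs.comp_isClosedEmbedding (iso_x q.1 q.2).isClosedEmbedding)
  simp only [key, integral_zero]

lemma int_pd1_eq_zero (L : ℝ) {h : ℝ × ℝ × ℝ → ℝ}
    (hs : ContDiff ℝ (⊤ : ℕ∞) h) (hc : HasCompactSupport h) :
    ∫ p in chan L, pd 1 h p = 0 := by
  have hFc : Continuous (pd 1 h) := (pd_contDiff hs 1).continuous
  have hFs : HasCompactSupport (pd 1 h) := pd_hcs hc 1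
  have hInt : Integrable (pd 1 h) volume := hFc.integrable_of_hasCompactSupport hFs
  have hIntP : Integrable (pd 1 h)
      (Measure.prod volume (Measure.prod volume (volume.restrict (Set.Icc (-L) L)))) := by
    rw [← meas_chan L]; exact hInt.restrict
  have hsec2 : ∀ x : ℝ, Integrable (fun q : ℝ × ℝ => pd 1 h (x, q))
      (Measure.prod volume (volume.restrict (Set.Icc (-L) L))) := by
    intro x
    have hcont : Continuous fun q : ℝ × ℝ => pd 1 h (x, q) :=
      hFc.comp (continuous_const.prodMk continuous_id)
    have hiso : Isometry (fun q : ℝ × ℝ => ((x, q) : ℝ × ℝ × ℝ)) := by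
      intro a b; simp [Prod.edist_eq, edist_self]
    have hsupp : HasCompactSupport fun q : ℝ × ℝ => pd 1 h (x, q) :=
      hFs.comp_isClosedEmbedding hiso.isClosedEmbedding
    rw [meas2 L]
    exact (hcont.integrable_of_hasCompactSupport hsupp).restrict
  rw [show (∫ p in chan L, pd 1 h p)
      = ∫ p, pd 1 h p ∂(Measure.prod volume (Measure.prod volume
          (volume.restrict (Set.Icc (-L) L)))) from by rw [← meas_chan L]]
  rw [MeasureTheory.integral_prod _ hIntP]
  have key : ∀ x : ℝ, (∫ q : ℝ × ℝ, pd 1 h (x, q)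
      ∂(Measure.prod volume (volume.restrict (Set.Icc (-L) L)))) = 0 := by
    intro x
    rw [MeasureTheory.integral_prod_symm _ (hsec2 x)]
    have key2 : ∀ z : ℝ, ∫ y : ℝ, pd 1 h (x, y, z) = 0 := by
      intro z
      exact integral_deriv_zero (fun y => hasDerivAt_sec1 hs x y z)
        (hFc.comp (continuous_const.prodMk (continuous_id.prodMk continuous_const)))
        (hc.comp_isClosedEmbedding (iso_y x z).isClosedEmbedding)
        (hFs.comp_isClosedEmbedding (iso_y x z).isClosedEmbedding)
    simp only [key2, integral_zero]
  simp only [key, integral_zero]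

lemma int_pd2_eq_zero (L : ℝ) (hL : 0 < L) {h : ℝ × ℝ × ℝ → ℝ}
    (hs : ContDiff ℝ (⊤ : ℕ∞) h) (hc : HasCompactSupport h)
    (hb : ∀ a b : ℝ, h (a, b, L) = 0 ∧ h (a, b, -L) = 0) :
    ∫ p in chan L, pd 2 h p = 0 := by
  have hFc : Continuous (pd 2 h) := (pd_contDiff hs 2).continuous
  have hFs : HasCompactSupport (pd 2 h) := pd_hcs hc 2
  have hInt : Integrable (pd 2 h) volume := hFc.integrable_of_hasCompactSupport hFs
  have hIntP : Integrable (pd 2 h)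
      (Measure.prod volume (Measure.prod volume (volume.restrict (Set.Icc (-L) L)))) := by
    rw [← meas_chan L]; exact hInt.restrict
  have hsec2 : ∀ x : ℝ, Integrable (fun q : ℝ × ℝ => pd 2 h (x, q))
      (Measure.prod volume (volume.restrict (Set.Icc (-L) L))) := by
    intro x
    have hcont : Continuous fun q : ℝ × ℝ => pd 2 h (x, q) :=
      hFc.comp (continuous_const.prodMk continuous_id)
    have hiso : Isometry (fun q : ℝ × ℝ => ((x, q) : ℝ × ℝ × ℝ)) := by
      intro a b; simp [Prod.edist_eq, edist_self]
    have hsupp : HasCompactSupport fun q : ℝ × ℝ => pd 2 h (x, q) :=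
      hFs.comp_isClosedEmbedding hiso.isClosedEmbedding
    rw [meas2 L]
    exact (hcont.integrable_of_hasCompactSupport hsupp).restrict
  rw [show (∫ p in chan L, pd 2 h p)
      = ∫ p, pd 2 h p ∂(Measure.prod volume (Measure.prod volume
          (volume.restrict (Set.Icc (-L) L)))) from by rw [← meas_chan L]]
  rw [MeasureTheory.integral_prod _ hIntP]
  have key : ∀ x : ℝ, (∫ q : ℝ × ℝ, pd 2 h (x, q)
      ∂(Measure.prod volume (volume.restrict (Set.Icc (-L) L)))) = 0 := by
    intro x
    rw [MeasureTheory.integral_prod _ (hsec2 x)]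
    have key2 : ∀ y : ℝ, (∫ z in Set.Icc (-L) L, pd 2 h (x, y, z)) = 0 := by
      intro y
      rw [MeasureTheory.integral_Icc_eq_integral_Ioc,
        ← intervalIntegral.integral_of_le (by linarith : -L ≤ L),
        intervalIntegral.integral_eq_sub_of_hasDerivAt
          (fun z _ => hasDerivAt_sec2 hs x y z)
          (((hFc.comp (continuous_const.prodMk
            (continuous_const.prodMk continuous_id)))).intervalIntegrable _ _),
        (hb x y).1, (hb x y).2]
      ring
    simp only [key2, integral_zero]
  simp only [key, integral_zero]

lemma pd_sum {g : Fin 3 → ℝ × ℝ × ℝ → ℝ} (hg : ∀ j, ContDiff ℝ (⊤ : ℕ∞) (g j)) (i : Fin 3)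
    (p : ℝ × ℝ × ℝ) :
    pd i (fun q => ∑ j : Fin 3, g j q) p = ∑ j : Fin 3, pd i (g j) p := by
  unfold pd
  rw [fderiv_fun_sum (fun j _ => ((hg j).differentiable (by simp)).differentiableAt)]
  simp

section aux
variable {u : Fin 3 → ℝ × ℝ × ℝ → ℝ}

lemma A_contDiff (hsm : ∀ k, ContDiff ℝ (⊤ : ℕ∞) (u k)) (k : Fin 3) :
    ContDiff ℝ (⊤ : ℕ∞) (fun q => ∑ j : Fin 3, u j q * pd j (u k) q) :=
  ContDiff.sum fun j _ => (hsm j).mul (pd_contDiff (hsm k) j)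

lemma A_hcs (hsm : ∀ k, ContDiff ℝ (⊤ : ℕ∞) (u k)) (hc : ∀ k, HasCompactSupport (u k)) (k : Fin 3) :
    HasCompactSupport (fun q => ∑ j : Fin 3, u j q * pd j (u k) q) := by
  have : (fun q => ∑ j : Fin 3, u j q * pd j (u k) q)
      = fun q => u 0 q * pd 0 (u k) q + u 1 q * pd 1 (u k) q + u 2 q * pd 2 (u k) q := by
    funext q; rw [Fin.sum_univ_three]
  rw [this]
  exact (((hc 0).mul_right).add ((hc 1).mul_right)).add ((hc 2).mul_right)

lemma W1_contDiff (hsm : ∀ k, ContDiff ℝ (⊤ : ℕ∞) (u k)) (k m : Fin 3) :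
    ContDiff ℝ (⊤ : ℕ∞) (fun q => (∑ j : Fin 3, u j q * pd j (u k) q) * pd m (u k) q) :=
  (A_contDiff hsm k).mul (pd_contDiff (hsm k) m)

lemma W1_hcs (hsm : ∀ k, ContDiff ℝ (⊤ : ℕ∞) (u k)) (hc : ∀ k, HasCompactSupport (u k)) (k m : Fin 3) :
    HasCompactSupport (fun q => (∑ j : Fin 3, u j q * pd j (u k) q) * pd m (u k) q) :=
  (A_hcs hsm hc k).mul_right

lemma W2_contDiff (hsm : ∀ k, ContDiff ℝ (⊤ : ℕ∞) (u k)) (j k m : Fin 3) :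
    ContDiff ℝ (⊤ : ℕ∞) (fun q => u j q * pd m (u k) q * pd m (u k) q) :=
  ((hsm j).mul (pd_contDiff (hsm k) m)).mul (pd_contDiff (hsm k) m)

lemma W2_hcs (hc : ∀ k, HasCompactSupport (u k)) (j k m : Fin 3) :
    HasCompactSupport (fun q => u j q * pd m (u k) q * pd m (u k) q) :=
  ((hc j).mul_right).mul_right

lemma pd_W1 (hsm : ∀ k, ContDiff ℝ (⊤ : ℕ∞) (u k)) (i m k : Fin 3) (p : ℝ × ℝ × ℝ) :
    pd i (fun q => (∑ j : Fin 3, u j q * pd j (u k) q) * pd m (u k) q) p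
      = (∑ j : Fin 3, (pd i (u j) p * pd j (u k) p + u j p * pd i (pd j (u k)) p))
          * pd m (u k) p
        + (∑ j : Fin 3, u j p * pd j (u k) p) * pd i (pd m (u k)) p := by
  rw [pd_mul (A_contDiff hsm k) (pd_contDiff (hsm k) m),
    pd_sum (fun j => (hsm j).mul (pd_contDiff (hsm k) j))]
  congr 1
  congr 1
  exact Finset.sum_congr rfl fun j _ => pd_mul (hsm j) (pd_contDiff (hsm k) j) i p

lemma pd_W2 (hsm : ∀ k, ContDiff ℝ (⊤ : ℕ∞) (u k)) (i j k m : Fin 3) (p : ℝ × ℝ × ℝ) :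
    pd i (fun q => u j q * pd m (u k) q * pd m (u k) q) p
      = (pd i (u j) p * pd m (u k) p + u j p * pd i (pd m (u k)) p) * pd m (u k) p
        + u j p * pd m (u k) p * pd i (pd m (u k)) p := by
  rw [pd_mul ((hsm j).mul (pd_contDiff (hsm k) m)) (pd_contDiff (hsm k) m),
    pd_mul (hsm j) (pd_contDiff (hsm k) m)]

end aux


/-- Divergence-form term 1. -/
def W1d (u : Fin 3 → ℝ × ℝ × ℝ → ℝ) (k m : Fin 3) : ℝ × ℝ × ℝ → ℝ :=
  pd m (fun q => (∑ j : Fin 3, u j q * pd j (u k) q) * pd m (u k) q)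

/-- Divergence-form term 2. -/
def W2d (u : Fin 3 → ℝ × ℝ × ℝ → ℝ) (j k m : Fin 3) : ℝ × ℝ × ℝ → ℝ :=
  pd j (fun q => u j q * pd m (u k) q * pd m (u k) q)

section aux2
variable {u : Fin 3 → ℝ × ℝ × ℝ → ℝ}

lemma perkm (hsm : ∀ k, ContDiff ℝ (⊤ : ℕ∞) (u k))
    (hdiv : ∀ p : ℝ × ℝ × ℝ, pd 0 (u 0) p + pd 1 (u 1) p + pd 2 (u 2) p = 0)
    (k m : Fin 3) (p : ℝ × ℝ × ℝ) :
    (∑ j : Fin 3, u j p * pd j (u k) p) * pd m (pd m (u k)) p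
      + ∑ j : Fin 3, pd j (u k) p * pd m (u j) p * pd m (u k) p
    = W1d u k m p - (1/2) * ∑ j : Fin 3, W2d u j k m p := by
  unfold W1d W2d
  rw [pd_W1 hsm m m k p,
    show (∑ j : Fin 3, pd j (fun q => u j q * pd m (u k) q * pd m (u k) q) p)
      = ∑ j : Fin 3, ((pd j (u j) p * pd m (u k) p + u j p * pd j (pd m (u k)) p) * pd m (u k) p
          + u j p * pd m (u k) p * pd j (pd m (u k)) p) from
      Finset.sum_congr rfl fun j _ => pd_W2 hsm j j k m p]
  simp only [Fin.sum_univ_three]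
  rw [pd_comm (hsm k) m 0 p, pd_comm (hsm k) m 1 p, pd_comm (hsm k) m 2 p]
  linear_combination (1/2) * pd m (u k) p * pd m (u k) p * hdiv p

end aux2

lemma hcs_sum {ι : Type*} (s : Finset ι) {f : ι → ℝ × ℝ × ℝ → ℝ}
    (h : ∀ i ∈ s, HasCompactSupport (f i)) :
    HasCompactSupport (fun x => ∑ i ∈ s, f i x) := by
  classical
  induction s using Finset.cons_induction with
  | empty =>
      simp only [Finset.sum_empty]
      exact HasCompactSupport.intro isCompact_empty (fun x _ => rfl)
  | cons a s ha ih =>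
      simp only [Finset.sum_cons]
      exact (h a (Finset.mem_cons_self a s)).add
        (ih fun i hi => h i (Finset.mem_cons_of_mem hi))

section aux3
variable {u : Fin 3 → ℝ × ℝ × ℝ → ℝ}

lemma intW1 (L : ℝ) (hsm : ∀ k, ContDiff ℝ (⊤ : ℕ∞) (u k)) (hc : ∀ k, HasCompactSupport (u k))
    (k m : Fin 3) (hm : m = 0 ∨ m = 1) :
    ∫ p in chan L, W1d u k m p = 0 := by
  rcases hm with rfl | rfl
  · exact int_pd0_eq_zero L (W1_contDiff hsm k 0) (W1_hcs hsm hc k 0)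
  · exact int_pd1_eq_zero L (W1_contDiff hsm k 1) (W1_hcs hsm hc k 1)

lemma intW2 (L : ℝ) (hL : 0 < L) (hsm : ∀ k, ContDiff ℝ (⊤ : ℕ∞) (u k))
    (hc : ∀ k, HasCompactSupport (u k))
    (hbc : ∀ a b : ℝ, ∀ k, u k (a, b, L) = 0 ∧ u k (a, b, -L) = 0) (j k m : Fin 3) :
    ∫ p in chan L, W2d u j k m p = 0 := by
  have hcd := W2_contDiff hsm j k m
  have hcs := W2_hcs hc j k m
  have hj : j = 0 ∨ j = 1 ∨ j = 2 := by
    rcases j with ⟨jv, hjv⟩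
    interval_cases jv
    · left; rfl
    · right; left; rfl
    · right; right; rfl
  rcases hj with rfl | rfl | rfl
  · exact int_pd0_eq_zero L hcd hcs
  · exact int_pd1_eq_zero L hcd hcs
  · exact int_pd2_eq_zero L hL hcd hcs (fun a b => by
      constructor
      · simp only [(hbc a b 2).1, zero_mul]
      · simp only [(hbc a b 2).2, zero_mul])

lemma intgW1 (L : ℝ) (hsm : ∀ k, ContDiff ℝ (⊤ : ℕ∞) (u k)) (hc : ∀ k, HasCompactSupport (u k))
    (k m : Fin 3) : Integrable (W1d u k m) (volume.restrict (chan L)) :=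
  (((pd_contDiff (W1_contDiff hsm k m) m).continuous).integrable_of_hasCompactSupport
    (pd_hcs (W1_hcs hsm hc k m) m)).restrict

lemma intgW2 (L : ℝ) (hsm : ∀ k, ContDiff ℝ (⊤ : ℕ∞) (u k)) (hc : ∀ k, HasCompactSupport (u k))
    (j k m : Fin 3) : Integrable (W2d u j k m) (volume.restrict (chan L)) :=
  (((pd_contDiff (W2_contDiff hsm j k m) j).continuous).integrable_of_hasCompactSupport
    (pd_hcs (W2_hcs hc j k m) j)).restrict

end aux3


set_option maxHeartbeats 1000000 in
/-- Integration-by-parts identity for the nonlinear term against the horizontal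
  Laplacian: for a smooth divergence-free `u` vanishing on `∂Ω` and decaying at
  horizontal infinity,
  `-∫_Ω ((u·∇)u)·Δ_h u = ∫_Ω Σ_{l=1}^{2} Σ_{j,k=1}^{3} (∂_j u_k)(∂_l u_j)(∂_l u_k)`. -/
theorem stmt13 (L : ℝ) (hL : 0 < L) (u : Fin 3 → ℝ × ℝ × ℝ → ℝ)
    (hsmooth : ∀ k, ContDiff ℝ (⊤ : ℕ∞) (u k))
    (hsupp : ∀ k, HasCompactSupport (u k))
    (hdiv : ∀ p : ℝ × ℝ × ℝ, pd 0 (u 0) p + pd 1 (u 1) p + pd 2 (u 2) p = 0)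
    (hbc : ∀ a b : ℝ, ∀ k, u k (a, b, L) = 0 ∧ u k (a, b, -L) = 0) :
    -(∫ p in chan L, ∑ k : Fin 3,
        (∑ j : Fin 3, u j p * pd j (u k) p)
          * (pd 0 (pd 0 (u k)) p + pd 1 (pd 1 (u k)) p))
      = ∫ p in chan L, ∑ l : Fin 2, ∑ j : Fin 3, ∑ k : Fin 3,
          pd j (u k) p * pd l.castSucc (u j) p * pd l.castSucc (u k) p := by
  have c0 : (0 : Fin 2).castSucc = (0 : Fin 3) := rfl
  have c1 : (1 : Fin 2).castSucc = (1 : Fin 3) := rfl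
  have hFi : Integrable (fun p => ∑ k : Fin 3,
      (∑ j : Fin 3, u j p * pd j (u k) p)
        * (pd 0 (pd 0 (u k)) p + pd 1 (pd 1 (u k)) p)) (volume.restrict (chan L)) := by
    apply Integrable.restrict
    apply Continuous.integrable_of_hasCompactSupport
    · apply continuous_finset_sum
      intro k _
      exact ((A_contDiff hsmooth k).continuous).mul
        (((pd_contDiff (pd_contDiff (hsmooth k) 0) 0).continuous).add
          ((pd_contDiff (pd_contDiff (hsmooth k) 1) 1).continuous))
    · exact hcs_sum _ fun k _ => (A_hcs hsmooth hsupp k).mul_right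
  have hGi : Integrable (fun p => ∑ l : Fin 2, ∑ j : Fin 3, ∑ k : Fin 3,
      pd j (u k) p * pd l.castSucc (u j) p * pd l.castSucc (u k) p)
      (volume.restrict (chan L)) := by
    apply Integrable.restrict
    apply Continuous.integrable_of_hasCompactSupport
    · apply continuous_finset_sum; intro l _
      apply continuous_finset_sum; intro j _
      apply continuous_finset_sum; intro k _
      exact ((pd_contDiff (hsmooth k) j).continuous.mul
        (pd_contDiff (hsmooth j) l.castSucc).continuous).mul
        (pd_contDiff (hsmooth k) l.castSucc).continuous
    · exact hcs_sum _ fun l _ => hcs_sum _ fun j _ => hcs_sum _ fun k _ =>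
        ((pd_hcs (hsupp k) j).mul_right).mul_right
  have hintD : ∀ (k : Fin 3) (l : Fin 2), Integrable
      (fun p => W1d u k l.castSucc p - (1/2) * ∑ j : Fin 3, W2d u j k l.castSucc p)
      (volume.restrict (chan L)) := fun k l =>
    (intgW1 L hsmooth hsupp k l.castSucc).sub
      ((integrable_finset_sum _ fun j _ => intgW2 L hsmooth hsupp j k l.castSucc).const_mul _)
  have hpt : ∀ p : ℝ × ℝ × ℝ,
      (∑ k : Fin 3, (∑ j : Fin 3, u j p * pd j (u k) p)
          * (pd 0 (pd 0 (u k)) p + pd 1 (pd 1 (u k)) p))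
        + (∑ l : Fin 2, ∑ j : Fin 3, ∑ k : Fin 3,
            pd j (u k) p * pd l.castSucc (u j) p * pd l.castSucc (u k) p)
      = ∑ k : Fin 3, ∑ l : Fin 2,
          (W1d u k l.castSucc p - (1/2) * ∑ j : Fin 3, W2d u j k l.castSucc p) := by
    intro p
    have swap : (∑ l : Fin 2, ∑ j : Fin 3, ∑ k : Fin 3,
        pd j (u k) p * pd l.castSucc (u j) p * pd l.castSucc (u k) p)
        = ∑ k : Fin 3, ∑ l : Fin 2, ∑ j : Fin 3,
            pd j (u k) p * pd l.castSucc (u j) p * pd l.castSucc (u k) p := by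
      rw [show (∑ l : Fin 2, ∑ j : Fin 3, ∑ k : Fin 3,
          pd j (u k) p * pd l.castSucc (u j) p * pd l.castSucc (u k) p)
          = ∑ l : Fin 2, ∑ k : Fin 3, ∑ j : Fin 3,
            pd j (u k) p * pd l.castSucc (u j) p * pd l.castSucc (u k) p from
        Finset.sum_congr rfl fun l _ => Finset.sum_comm]
      exact Finset.sum_comm
    rw [swap, ← Finset.sum_add_distrib]
    refine Finset.sum_congr rfl fun k _ => ?_
    simp only [Fin.sum_univ_two, c0, c1]
    rw [← perkm hsmooth hdiv k 0 p, ← perkm hsmooth hdiv k 1 p]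
    ring
  have key : (∫ p in chan L,
      ((∑ k : Fin 3, (∑ j : Fin 3, u j p * pd j (u k) p)
          * (pd 0 (pd 0 (u k)) p + pd 1 (pd 1 (u k)) p))
        + (∑ l : Fin 2, ∑ j : Fin 3, ∑ k : Fin 3,
            pd j (u k) p * pd l.castSucc (u j) p * pd l.castSucc (u k) p))) = 0 := by
    simp only [hpt]
    rw [integral_finset_sum _ (fun k _ => integrable_finset_sum _ (fun l _ => hintD k l))]
    apply Finset.sum_eq_zero
    intro k _
    rw [integral_finset_sum _ (fun l _ => hintD k l)]
    apply Finset.sum_eq_zero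
    intro l _
    rw [integral_sub (intgW1 L hsmooth hsupp k l.castSucc)
      ((integrable_finset_sum _ fun j _ => intgW2 L hsmooth hsupp j k l.castSucc).const_mul _)]
    have hm : l.castSucc = (0 : Fin 3) ∨ l.castSucc = (1 : Fin 3) := by
      rcases l with ⟨lv, hlv⟩
      interval_cases lv
      · left; rfl
      · right; rfl
    rw [intW1 L hsmooth hsupp k l.castSucc hm, integral_const_mul,
      integral_finset_sum _ (fun j _ => intgW2 L hsmooth hsupp j k l.castSucc)]
    rw [Finset.sum_eq_zero (fun j _ => intW2 L hL hsmooth hsupp hbc j k l.castSucc)]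
    ring
  rw [integral_add hFi hGi] at key
  linarith
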